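/- arXiv:1703.01134 — 9 statements merged into one kernel-verified Lean document; each statement's English description precedes it below -/
import Mathlib

section
/- Let p be a projection of a von Neumann algebra M acting on a complex Hilbert space H. Then p is central (i.e. p x = x p for all x ∈ M) if and only if Π_p = {p}. -/
/-- `p` is a projection belonging to the von Neumann algebra `M`. -/
def IsProjectionIn {H : Type*} [NormedAddCommGroup H] [InnerProductSpace ℂ H] [CompleteSpace H]
    (M : VonNeumannAlgebra H) (p : H →L[ℂ] H) : Prop :=
  p ∈ M ∧ star p = p ∧ p * p = p

/-- The subspace `qM = {x ∈ M : q x = x}` of `M`. -/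
def leftSubspace {H : Type*} [NormedAddCommGroup H] [InnerProductSpace ℂ H] [CompleteSpace H]
    (M : VonNeumannAlgebra H) (q : H →L[ℂ] H) : Set (H →L[ℂ] H) :=
  {x | x ∈ M ∧ q * x = x}

/-- `Π_p`: the set of projections `q` of `M` such that `M` is the internal direct sum
of the subspaces `qM` and `(1-p)M`. -/
def PiSet {H : Type*} [NormedAddCommGroup H] [InnerProductSpace ℂ H] [CompleteSpace H]
    (M : VonNeumannAlgebra H) (p : H →L[ℂ] H) : Set (H →L[ℂ] H) :=
  {q | IsProjectionIn M q ∧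
    leftSubspace M q ∩ leftSubspace M (1 - p) = {0} ∧
    ∀ x ∈ M, ∃ a ∈ leftSubspace M q, ∃ b ∈ leftSubspace M (1 - p), x = a + b}

/-- Membership in `leftSubspace M (1 - p)` is equivalent to `p * x = 0` (plus membership). -/
lemma mem_leftSubspace_one_sub_iff {H : Type*} [NormedAddCommGroup H] [InnerProductSpace ℂ H]
    [CompleteSpace H] (M : VonNeumannAlgebra H) (p x : H →L[ℂ] H) :
    x ∈ leftSubspace M (1 - p) ↔ x ∈ M ∧ p * x = 0 := by
  unfold leftSubspace
  constructor
  · rintro ⟨hxM, hx⟩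
    rw [sub_mul, one_mul] at hx
    exact ⟨hxM, sub_eq_self.mp hx⟩
  · rintro ⟨hxM, hx⟩
    exact ⟨hxM, by rw [sub_mul, one_mul, hx, sub_zero]⟩

/-- The inverse of a unit belonging to a von Neumann algebra belongs to the algebra. -/
lemma inv_mem_vonNeumann {H : Type*} [NormedAddCommGroup H] [InnerProductSpace ℂ H]
    [CompleteSpace H] (M : VonNeumannAlgebra H) (u : (H →L[ℂ] H)ˣ)
    (hu : (u : H →L[ℂ] H) ∈ M) : ((↑u⁻¹ : H →L[ℂ] H) ∈ M) := by
  have hM := M.centralizer_centralizer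
  have : (↑u⁻¹ : H →L[ℂ] H) ∈ Set.centralizer (Set.centralizer (M : Set (H →L[ℂ] H))) := by
    rw [Set.mem_centralizer_iff]
    intro g hg
    rw [Set.mem_centralizer_iff] at hg
    have hcu : Commute (↑u : H →L[ℂ] H) g := hg _ hu
    exact (hcu.symm.units_inv_right).eq
  rwa [hM] at this

/-- A projection `p` of a von Neumann algebra `M` is central iff `Π_p = {p}`. -/
theorem central_iff_PiSet_eq_singleton {H : Type*} [NormedAddCommGroup H]
    [InnerProductSpace ℂ H] [CompleteSpace H] (M : VonNeumannAlgebra H)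
    (p : H →L[ℂ] H) (hp : IsProjectionIn M p) :
    (∀ x ∈ M, p * x = x * p) ↔ PiSet M p = {p} := by
  obtain ⟨hpM, hps, hpp⟩ := hp
  constructor
  · -- centrality implies Π_p = {p}
    intro hc
    rw [Set.eq_singleton_iff_unique_mem]
    constructor
    · -- p ∈ Π_p
      refine ⟨⟨hpM, hps, hpp⟩, ?_, ?_⟩
      · ext x
        simp only [Set.mem_inter_iff, Set.mem_singleton_iff]
        constructor
        · rintro ⟨⟨_, hx1⟩, hx2⟩
          rw [mem_leftSubspace_one_sub_iff] at hx2
          rw [← hx1, hx2.2]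
        · rintro rfl
          exact ⟨⟨M.zero_mem, mul_zero p⟩,
            (mem_leftSubspace_one_sub_iff M p 0).mpr ⟨M.zero_mem, mul_zero p⟩⟩
      · intro x hx
        refine ⟨p * x, ⟨M.mul_mem hpM hx, by rw [← mul_assoc, hpp]⟩,
          x - p * x, (mem_leftSubspace_one_sub_iff M p _).mpr
            ⟨M.sub_mem hx (M.mul_mem hpM hx), ?_⟩, by abel⟩
        rw [mul_sub, ← mul_assoc, hpp, sub_self]
    · -- uniqueness
      rintro q ⟨⟨hqM, hqs, hqq⟩, hint, hdec⟩
      have hpq : p * q = q * p := hc q hqM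
      -- Step 1 : q * p = q
      have hqp : q * p = q := by
        have hy : q * (1 - p) = 0 := by
          have hmem : q * (1 - p) ∈ leftSubspace M q ∩ leftSubspace M (1 - p) := by
            constructor
            · refine ⟨M.mul_mem hqM (M.sub_mem M.one_mem hpM), ?_⟩
              rw [← mul_assoc, hqq]
            · rw [mem_leftSubspace_one_sub_iff]
              refine ⟨M.mul_mem hqM (M.sub_mem M.one_mem hpM), ?_⟩
              rw [← mul_assoc, hpq, mul_assoc, mul_sub, mul_one, hpp, sub_self, mul_zero]
          rw [hint] at hmem
          exact hmem
        have h0 : q - q * p = 0 := by rw [← hy, mul_sub, mul_one]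
        exact (sub_eq_zero.mp h0).symm
      -- Step 2 : decompose p - q
      obtain ⟨a, ⟨haM, hqa⟩, b, hb, heq⟩ := hdec (p - q) (M.sub_mem hpM hqM)
      rw [mem_leftSubspace_one_sub_iff] at hb
      obtain ⟨hbM, hpb⟩ := hb
      have hppq : p * (p - q) = p - q := by
        rw [mul_sub, hpp, hpq, hqp]
      have hqpq : q * (p - q) = 0 := by
        rw [mul_sub, hqp, hqq, sub_self]
      have h1 : p - q = p * a := by
        calc p - q = p * (p - q) := hppq.symm
          _ = p * a + p * b := by rw [heq, mul_add]
          _ = p * a := by rw [hpb, add_zero]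
      have h2 : a + q * b = 0 := by
        calc a + q * b = q * a + q * b := by rw [hqa]
          _ = q * (p - q) := by rw [heq, mul_add]
          _ = 0 := hqpq
      have h2' : a = -(q * b) := eq_neg_of_add_eq_zero_left h2
      have h3 : p - q = a := by
        calc p - q = p * a := h1
          _ = p * -(q * b) := by rw [← h2']
          _ = -(p * q * b) := by rw [mul_neg, mul_assoc]
          _ = -(q * b) := by rw [hpq, hqp]
          _ = a := h2'.symm
      have h4 : p - q = 0 := by
        calc p - q = q * (p - q) := by rw [h3, hqa]
          _ = 0 := hqpq
      exact (sub_eq_zero.mp h4).symm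
  · -- Π_p = {p} implies centrality
    intro hPi
    have key : ∀ y ∈ M, (1 - p) * (y * p) = 0 := by
      intro y hyM
      by_contra hv
      set v : H →L[ℂ] H := (1 - p) * (y * p) with hvdef
      have hvM : v ∈ M := M.mul_mem (M.sub_mem M.one_mem hpM) (M.mul_mem hyM hpM)
      have hpv : p * v = 0 := by
        rw [hvdef, ← mul_assoc, mul_sub, mul_one, hpp, sub_self, zero_mul]
      have hvp : v * p = v := by
        rw [hvdef, mul_assoc, mul_assoc, hpp]
      set a : H →L[ℂ] H := p + v with hadef
      have haM : a ∈ M := M.add_mem hpM hvM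
      have hpa : p * a = p := by rw [hadef, mul_add, hpp, hpv, add_zero]
      have hvv : v * v = 0 := by
        calc v * v = v * p * v := by rw [hvp]
          _ = v * (p * v) := by rw [mul_assoc]
          _ = 0 := by rw [hpv, mul_zero]
      have haa : a * a = a := by
        rw [hadef, add_mul, mul_add, mul_add, hpp, hpv, hvv, hvp, add_zero, add_zero]
      have hsaa : star a * star a = star a := by
        rw [← star_mul, haa]
      set s : H →L[ℂ] H := a - star a with hsdef
      set z : H →L[ℂ] H := 1 + star s * s with hzdef
      have hzM : z ∈ M := by
        rw [hzdef, hsdef]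
        exact M.add_mem M.one_mem
          (M.mul_mem (M.toStarSubalgebra.star_mem' (M.sub_mem haM (M.toStarSubalgebra.star_mem' haM)))
            (M.sub_mem haM (M.toStarSubalgebra.star_mem' haM)))
      have hzexp : z = 1 - a - star a + star a * a + a * star a := by
        rw [hzdef, hsdef, star_sub, star_star]
        have hexp : (star a - a) * (a - star a)
            = star a * a - star a * star a - a * a + a * star a := by noncomm_ring
        rw [hexp, haa, hsaa]
        noncomm_ring
      have hza : z * a = a * star a * a := by
        rw [hzexp]
        simp only [add_mul, sub_mul, one_mul]
        rw [haa, mul_assoc (star a) a a, haa]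
        abel
      have hsaz : star a * z = star a * (a * star a) := by
        rw [hzexp]
        simp only [mul_add, mul_sub, mul_one]
        rw [← mul_assoc (star a) (star a) a, hsaa]
        abel
      have hzcomm : z * (a * star a) = a * star a * z := by
        calc z * (a * star a) = z * a * star a := by rw [mul_assoc]
          _ = a * star a * a * star a := by rw [hza]
          _ = a * (star a * (a * star a)) := by simp only [mul_assoc]
          _ = a * (star a * z) := by rw [hsaz]
          _ = a * star a * z := (mul_assoc a (star a) z).symm
      have hzs : star z = z := by
        rw [hzdef, star_add, star_one, star_mul, star_star]
      have hzu : IsUnit z := by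
        rw [hzdef]
        exact CStarAlgebra.isUnit_of_le 1
          (le_add_of_nonneg_right (star_mul_self_nonneg s)) isStrictlyPositive_one
      obtain ⟨u, hu⟩ := hzu
      have huinv : (↑u⁻¹ : H →L[ℂ] H) * z = 1 := by rw [← hu]; exact u.inv_mul
      have hinvu : z * (↑u⁻¹ : H →L[ℂ] H) = 1 := by rw [← hu]; exact u.mul_inv
      have huinvM : (↑u⁻¹ : H →L[ℂ] H) ∈ M := inv_mem_vonNeumann M u (hu ▸ hzM)
      have hCu : Commute (a * star a) (↑u : H →L[ℂ] H) := by
        rw [hu]; exact hzcomm.symm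
      have huinvcomm : (↑u⁻¹ : H →L[ℂ] H) * (a * star a) = a * star a * ↑u⁻¹ :=
        (hCu.units_inv_right).symm.eq
      have huinvs : star (↑u⁻¹ : H →L[ℂ] H) = ↑u⁻¹ := by
        have h1 : star (↑u⁻¹ : H →L[ℂ] H) * z = 1 := by
          calc star (↑u⁻¹ : H →L[ℂ] H) * z = star (star z * ↑u⁻¹) := by
                rw [star_mul, star_star]
            _ = star (z * ↑u⁻¹) := by rw [hzs]
            _ = 1 := by rw [hinvu, star_one]
        calc star (↑u⁻¹ : H →L[ℂ] H) = star ↑u⁻¹ * (z * ↑u⁻¹) := by rw [hinvu, mul_one]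
          _ = (star ↑u⁻¹ * z) * ↑u⁻¹ := by rw [mul_assoc]
          _ = ↑u⁻¹ := by rw [h1, one_mul]
      set q : H →L[ℂ] H := a * star a * ↑u⁻¹ with hqdef
      have hqM : q ∈ M := M.mul_mem (M.mul_mem haM (M.toStarSubalgebra.star_mem' haM)) huinvM
      have hqa : q * a = a := by
        calc q * a = ↑u⁻¹ * (a * star a) * a := by rw [huinvcomm]
          _ = ↑u⁻¹ * (a * star a * a) := by simp only [mul_assoc]
          _ = ↑u⁻¹ * (z * a) := by rw [hza]
          _ = (↑u⁻¹ * z) * a := by rw [mul_assoc]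
          _ = a := by rw [huinv, one_mul]
      have haq : a * q = q := by
        rw [hqdef, ← mul_assoc, ← mul_assoc, haa]
      have hqs : star q = q := by
        rw [hqdef, star_mul, huinvs, star_mul, star_star, huinvcomm, hqdef]
      have hqq : q * q = q := by
        calc q * q = (a * star a) * (↑u⁻¹ * (a * star a)) * ↑u⁻¹ := by
              rw [hqdef]; simp only [mul_assoc]
          _ = (a * star a) * ((a * star a) * ↑u⁻¹) * ↑u⁻¹ := by rw [huinvcomm, hqdef]
          _ = (a * (star a * (a * star a))) * (↑u⁻¹ * ↑u⁻¹) := by simp only [mul_assoc]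
          _ = (a * (star a * z)) * (↑u⁻¹ * ↑u⁻¹) := by rw [hsaz]
          _ = (a * star a) * ((z * ↑u⁻¹) * ↑u⁻¹) := by simp only [mul_assoc]
          _ = q := by rw [hinvu, one_mul, hqdef]
      have hqPi : q ∈ PiSet M p := by
        refine ⟨⟨hqM, hqs, hqq⟩, ?_, ?_⟩
        · ext x
          simp only [Set.mem_inter_iff, Set.mem_singleton_iff]
          constructor
          · rintro ⟨⟨hxM, hx1⟩, hx2⟩
            rw [mem_leftSubspace_one_sub_iff] at hx2
            have hax : a * x = x := by
              calc a * x = a * (q * x) := by rw [hx1]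
                _ = (a * q) * x := by rw [← mul_assoc]
                _ = q * x := by rw [haq]
                _ = x := hx1
            have hax0 : a * x = 0 := by
              rw [hadef, add_mul, hx2.2, zero_add, ← hvp, mul_assoc, hx2.2, mul_zero]
            rw [hax] at hax0
            exact hax0
          · rintro rfl
            exact ⟨⟨M.zero_mem, mul_zero q⟩,
              (mem_leftSubspace_one_sub_iff M p 0).mpr ⟨M.zero_mem, mul_zero p⟩⟩
        · intro x hxM
          refine ⟨a * x, ⟨M.mul_mem haM hxM, by rw [← mul_assoc, hqa]⟩,
            x - a * x, (mem_leftSubspace_one_sub_iff M p _).mpr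
              ⟨M.sub_mem hxM (M.mul_mem haM hxM), ?_⟩, by abel⟩
          rw [mul_sub, ← mul_assoc, hpa, sub_self]
      rw [hPi, Set.mem_singleton_iff] at hqPi
      have hap' : a = p := by
        calc a = q * a := hqa.symm
          _ = p * a := by rw [hqPi]
          _ = p := hpa
      have hv0 : v = 0 := by
        rw [hadef] at hap'
        exact add_eq_left.mp hap'
      exact hv hv0
    intro x hx
    have h1 := key x hx
    have h2 := key (star x) (M.toStarSubalgebra.star_mem' hx)
    rw [sub_mul, one_mul] at h1 h2
    have h1' : x * p = p * (x * p) := sub_eq_zero.mp h1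
    have h2' : star x * p = p * (star x * p) := sub_eq_zero.mp h2
    have hstar := congrArg star h2'
    simp only [star_mul, star_star, hps] at hstar
    rw [hstar, h1', mul_assoc]
end

section
/- Let p be a projection of a von Neumann algebra M acting on a complex Hilbert space H. If p is not central, then Π_p contains no central projection; that is, every q ∈ Π_p satisfies: q is not central. -/
/-- If a projection `p` of a von Neumann algebra `M` is not central, then `Π_p`
contains no central projection. -/
theorem PiSet_no_central_of_not_central {H : Type*} [NormedAddCommGroup H]
    [InnerProductSpace ℂ H] [CompleteSpace H] (M : VonNeumannAlgebra H)
    (p : H →L[ℂ] H) (hp : IsProjectionIn M p) (hpc : ¬ ∀ x ∈ M, p * x = x * p) :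
    ∀ q ∈ PiSet M p, ¬ ∀ x ∈ M, q * x = x * q := by
  rintro q ⟨hq, hint, hdec⟩ hqc
  apply hpc
  -- q commutes with p
  have hqp : q * p = p * q := hqc p hp.1
  -- decompose 1
  obtain ⟨a, ⟨haM, hqa⟩, b, ⟨hbM, hpb⟩, h1⟩ := hdec 1 M.one_mem
  -- p * b = 0
  have hpb0 : p * b = 0 := by
    have h := hpb
    rwa [sub_mul, one_mul, sub_eq_self] at h
  -- p = p * a
  have hpa : p = p * a := by
    have h := congrArg (fun y => p * y) h1
    simpa [mul_add, hpb0] using h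
  -- p * q = p
  have hpq : p * q = p := by
    calc p * q = q * p := hqp.symm
    _ = q * (p * a) := by rw [← hpa]
    _ = p * (q * a) := by rw [← mul_assoc, hqp, mul_assoc]
    _ = p * a := by rw [hqa]
    _ = p := hpa.symm
  -- q - p is in both subspaces, hence zero
  have hmem : q - p ∈ leftSubspace M q ∩ leftSubspace M (1 - p) := by
    refine ⟨⟨sub_mem hq.1 hp.1, ?_⟩, ⟨sub_mem hq.1 hp.1, ?_⟩⟩
    · have hqq := hq.2.2
      have hqp' : q * p = p := hqp.trans hpq
      linear_combination (norm := noncomm_ring) hqq - hqp'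
    · have hpp := hp.2.2
      rw [sub_mul, one_mul, mul_sub, hpq, hpp]
      abel
  rw [hint, Set.mem_singleton_iff, sub_eq_zero] at hmem
  intro x hx
  rw [← hmem]
  exact hqc x hx
end

section
/- Let p and q be projections of a von Neumann algebra M acting on a complex Hilbert space H. If q ∈ Π_p, then p and q are Murray–von Neumann equivalent: there exists u ∈ M with u* u = q and u u* = p. -/
open scoped InnerProductSpace

lemma aux_commute_of_mem_elemental {H : Type*} [NormedAddCommGroup H]
    [InnerProductSpace ℂ H] [CompleteSpace H] {z y x : H →L[ℂ] H} (hz : star z = z)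
    (hx : x ∈ StarAlgebra.elemental ℂ z) (hzy : Commute z y) : Commute x y := by
  refine StarAlgebra.elemental.induction_on (R := ℂ) hx (P := fun u _ => Commute u y)
    hzy (by simpa [hz] using hzy) (fun r => ?_) (fun u _ v _ hu hv => hu.add_left hv)
    (fun u _ v _ hu hv => hu.mul_left hv) (fun s hs hcomm v hv => ?_)
  · exact (Algebra.commutes r y)
  · have hclosed : IsClosed {w : H →L[ℂ] H | Commute w y} :=
      isClosed_eq (continuous_mul_right y) (continuous_mul_left y)
    exact closure_minimal (fun u hu => hcomm u hu) hclosed hv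

set_option maxHeartbeats 1000000 in
/-- If `q ∈ Π_p`, then `p` and `q` are Murray–von Neumann equivalent:
there is `u ∈ M` with `u* u = q` and `u u* = p`. -/
theorem murrayVonNeumann_equiv_of_mem_PiSet {H : Type*} [NormedAddCommGroup H]
    [InnerProductSpace ℂ H] [CompleteSpace H] (M : VonNeumannAlgebra H)
    (p q : H →L[ℂ] H) (hp : IsProjectionIn M p) (hq : q ∈ PiSet M p) :
    ∃ u ∈ M, star u * u = q ∧ u * star u = p := by
  obtain ⟨hpM, hpstar, hpidem⟩ := hp
  obtain ⟨⟨hqM, hqstar, hqidem⟩, hinter, hdecomp⟩ := hq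
  have h1p : (1 : H →L[ℂ] H) - p ∈ M := sub_mem (one_mem M) hpM
  -- uniqueness of decompositions
  have huniq : ∀ x₁ y₁ x₂ y₂ : H →L[ℂ] H, x₁ ∈ leftSubspace M q →
      y₁ ∈ leftSubspace M (1 - p) → x₂ ∈ leftSubspace M q → y₂ ∈ leftSubspace M (1 - p) →
      x₁ + y₁ = x₂ + y₂ → x₁ = x₂ := by
    intro x₁ y₁ x₂ y₂ hx₁ hy₁ hx₂ hy₂ heq
    have hd : x₁ - x₂ = y₂ - y₁ := by rw [sub_eq_sub_iff_add_eq_add, heq, add_comm]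
    have hmem : x₁ - x₂ ∈ leftSubspace M q ∩ leftSubspace M (1 - p) := by
      refine ⟨⟨sub_mem hx₁.1 hx₂.1, by rw [mul_sub, hx₁.2, hx₂.2]⟩, ?_⟩
      rw [hd]
      exact ⟨sub_mem hy₂.1 hy₁.1, by rw [mul_sub, hy₂.2, hy₁.2]⟩
    rw [hinter] at hmem
    exact sub_eq_zero.mp hmem
  obtain ⟨a, ha, b, hb, hone⟩ := hdecomp 1 (one_mem M)
  have haM : a ∈ M := ha.1
  have hqa : q * a = a := ha.2
  have hpb : p * b = 0 := by
    have h2 := hb.2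
    rw [sub_mul, one_mul] at h2
    exact sub_eq_self.mp h2
  have haq : a * q = q := by
    refine (huniq q 0 (a * q) (b * q) ⟨hqM, hqidem⟩ ⟨zero_mem M, mul_zero _⟩
      ⟨mul_mem haM hqM, by rw [← mul_assoc, hqa]⟩
      ⟨mul_mem hb.1 hqM, by rw [← mul_assoc, hb.2]⟩ ?_).symm
    rw [add_zero, ← add_mul, ← hone, one_mul]
  have hap : a * p = a := by
    have h0 : (0 : H →L[ℂ] H) = a * (1 - p) := by
      refine huniq 0 (1 - p) (a * (1 - p)) (b * (1 - p)) ⟨zero_mem M, mul_zero _⟩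
        ⟨h1p, by simp [sub_mul, mul_sub, hpidem]⟩
        ⟨mul_mem haM h1p, by rw [← mul_assoc, hqa]⟩
        ⟨mul_mem hb.1 h1p, by rw [← mul_assoc, hb.2]⟩ ?_
      rw [zero_add, ← add_mul, ← hone, one_mul]
    have h2 := h0.symm
    rw [mul_sub, mul_one] at h2
    exact (sub_eq_zero.mp h2).symm
  have hpa : p * a = p := by
    have h1 : p * 1 = p * a + p * b := by rw [hone, mul_add]
    rw [mul_one, hpb, add_zero] at h1
    exact h1.symm
  -- star identities
  have ha'M : star a ∈ M := star_mem haM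
  have hqa' : q * star a = q := by simpa [star_mul, hqstar] using congrArg star haq
  have ha'q : star a * q = star a := by simpa [star_mul, hqstar] using congrArg star hqa
  have hpa' : p * star a = star a := by simpa [star_mul, hpstar] using congrArg star hap
  have ha'p : star a * p = p := by simpa [star_mul, hpstar] using congrArg star hpa
  -- the auxiliary positive invertible element
  set z : H →L[ℂ] H := a * star a + (1 - q) with hzdef
  have hzM : z ∈ M := add_mem (mul_mem haM ha'M) (sub_mem (one_mem M) hqM)
  have hzsa : star z = z := by
    simp [hzdef, star_sub, star_mul, star_star, hqstar]
  have hzsa' : IsSelfAdjoint z := hzsa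
  have hnormal : IsStarNormal z := hzsa'.isStarNormal
  have hzq : z * q = a * star a := by
    rw [hzdef, add_mul, sub_mul, one_mul, hqidem, sub_self, add_zero, mul_assoc, ha'q]
  have hqz : q * z = a * star a := by
    rw [hzdef, mul_add, mul_sub, mul_one, hqidem, sub_self, add_zero, ← mul_assoc, hqa]
  have hz1q : z * (1 - q) = 1 - q := by
    rw [mul_sub, mul_one, hzq, hzdef, add_sub_cancel_left]
  have haa' : a * star a = z - (1 - q) := by rw [hzdef, add_sub_cancel_right]
  -- positivity of z
  have hrez : ∀ ξ : H, RCLike.re (⟪z ξ, ξ⟫_ℂ) = ‖star a ξ‖ ^ 2 + ‖(1 - q) ξ‖ ^ 2 := by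
    intro ξ
    have h1 : (⟪(a * star a) ξ, ξ⟫_ℂ) = (‖star a ξ‖ : ℂ) ^ 2 := by
      rw [ContinuousLinearMap.mul_apply]
      calc ⟪a (star a ξ), ξ⟫_ℂ
          = ⟪ContinuousLinearMap.adjoint (star a) (star a ξ), ξ⟫_ℂ := by
            rw [← ContinuousLinearMap.star_eq_adjoint, star_star]
        _ = ⟪star a ξ, star a ξ⟫_ℂ := by
            rw [ContinuousLinearMap.adjoint_inner_left, ContinuousLinearMap.star_eq_adjoint]
        _ = (‖star a ξ‖ : ℂ) ^ 2 := inner_self_eq_norm_sq_to_K _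
    have h2 : (⟪(1 - q) ξ, ξ⟫_ℂ) = (‖(1 - q) ξ‖ : ℂ) ^ 2 := by
      have hproj : (1 - q) * (1 - q) = 1 - q := by simp [sub_mul, mul_sub, hqidem]
      have hsa : star ((1 : H →L[ℂ] H) - q) = 1 - q := by simp [star_sub, hqstar]
      calc ⟪(1 - q) ξ, ξ⟫_ℂ
          = ⟪(1 - q) ((1 - q) ξ), ξ⟫_ℂ := by
            rw [← ContinuousLinearMap.mul_apply, hproj]
        _ = ⟪ContinuousLinearMap.adjoint (1 - q) ((1 - q) ξ), ξ⟫_ℂ := by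
            rw [← ContinuousLinearMap.star_eq_adjoint, hsa]
        _ = ⟪(1 - q) ξ, (1 - q) ξ⟫_ℂ := by rw [ContinuousLinearMap.adjoint_inner_left]
        _ = (‖(1 - q) ξ‖ : ℂ) ^ 2 := inner_self_eq_norm_sq_to_K _
    have : (⟪z ξ, ξ⟫_ℂ) = (‖star a ξ‖ : ℂ) ^ 2 + (‖(1 - q) ξ‖ : ℂ) ^ 2 := by
      rw [hzdef]
      rw [ContinuousLinearMap.add_apply, inner_add_left, h1, h2]
    rw [this]
    rw [map_add]
    norm_cast
  have hzpos : (0 : H →L[ℂ] H) ≤ z := by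
    rw [ContinuousLinearMap.nonneg_iff_isPositive]
    refine ⟨ContinuousLinearMap.isSelfAdjoint_iff_isSymmetric.mp hzsa', fun ξ => ?_⟩
    rw [ContinuousLinearMap.reApplyInnerSelf, hrez]
    positivity
  -- coercivity and invertibility of z
  have hcoer : ∀ ξ : H, ‖ξ‖ ^ 2 ≤ 2 * max (‖q‖ ^ 2) 1 * (‖star a ξ‖ ^ 2 + ‖(1 - q) ξ‖ ^ 2) := by
    intro ξ
    have hsplit : ξ = q ξ + (1 - q) ξ := by
      simp [ContinuousLinearMap.sub_apply]
    have h1 : ‖ξ‖ ≤ ‖q ξ‖ + ‖(1 - q) ξ‖ := by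
      conv_lhs => rw [hsplit]
      exact norm_add_le _ _
    have h2 : ‖q ξ‖ ≤ ‖q‖ * ‖star a ξ‖ := by
      have : q ξ = q (star a ξ) := by
        conv_lhs => rw [← hqa']
        rw [ContinuousLinearMap.mul_apply]
      rw [this]
      exact (q.le_opNorm _)
    have hq1 : ‖q‖ ^ 2 ≤ max (‖q‖ ^ 2) 1 := le_max_left _ _
    have hq2 : (1 : ℝ) ≤ max (‖q‖ ^ 2) 1 := le_max_right _ _
    nlinarith [norm_nonneg (q ξ), norm_nonneg ((1 - q) ξ), norm_nonneg (star a ξ),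
      norm_nonneg ξ, norm_nonneg q, sq_nonneg (‖q ξ‖ - ‖(1 - q) ξ‖)]
  have hzunit : IsUnit z := by
    have hCpos : (0:ℝ) < 2 * max (‖q‖ ^ 2) 1 := by positivity
    set C : ℝ := 2 * max (‖q‖ ^ 2) 1 with hC
    refine ContinuousLinearMap.isUnit_of_forall_le_norm_inner_map z
      (c := C⁻¹.toNNReal) (Real.toNNReal_pos.mpr (inv_pos.mpr hCpos)) fun ξ => ?_
    have h1 : RCLike.re (⟪z ξ, ξ⟫_ℂ) ≤ ‖(⟪z ξ, ξ⟫_ℂ)‖ := RCLike.re_le_norm _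
    have h2 := hrez ξ
    have h3 := hcoer ξ
    have hcoe : (C⁻¹.toNNReal : ℝ) = C⁻¹ := Real.coe_toNNReal _ (inv_nonneg.mpr hCpos.le)
    rw [hcoe]
    have hineq : ‖ξ‖ ^ 2 * C⁻¹ ≤ ‖star a ξ‖ ^ 2 + ‖(1 - q) ξ‖ ^ 2 := by
      calc ‖ξ‖ ^ 2 * C⁻¹ ≤ (C * (‖star a ξ‖ ^ 2 + ‖(1 - q) ξ‖ ^ 2)) * C⁻¹ :=
            mul_le_mul_of_nonneg_right h3 (by positivity)
        _ = ‖star a ξ‖ ^ 2 + ‖(1 - q) ξ‖ ^ 2 := by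
            field_simp
    exact hineq.trans (le_of_eq_of_le h2.symm h1)
    -- spectrum of z
  have hspec : ∀ w ∈ spectrum ℂ z, (w.re : ℂ) = w ∧ 0 < w.re := by
    intro w hw
    have hres : SpectrumRestricts z Complex.reCLM := hzsa'.spectrumRestricts
    have h1 : (algebraMap ℝ ℂ) (Complex.reCLM w) = w := hres.rightInvOn hw
    have h1' : (w.re : ℂ) = w := by simpa using h1
    have h2 : w.re ∈ spectrum ℝ z := by simpa using hres.apply_mem hw
    have h3 : 0 ≤ w.re := spectrum_nonneg_of_nonneg hzpos h2
    have h4 : w ≠ 0 := by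
      intro h0
      exact (spectrum.zero_notMem_iff ℂ).mpr hzunit (h0 ▸ hw)
    refine ⟨h1', lt_of_le_of_ne h3 fun h0 => ?_⟩
    apply h4
    rw [← h1', ← h0]
    simp
  -- the square root of the inverse of z
  set f : ℂ → ℂ := fun w => (Real.sqrt (w.re)⁻¹ : ℂ) with hfdef
  have hfcont : ContinuousOn f (spectrum ℂ z) := by
    apply Continuous.comp_continuousOn (Complex.continuous_ofReal.comp Real.continuous_sqrt)
    exact (Complex.continuous_re.continuousOn).inv₀ fun w hw => ne_of_gt (hspec w hw).2
  set s : H →L[ℂ] H := cfc f z with hsdef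
  have hs_elem : s ∈ StarAlgebra.elemental ℂ z := by
    rw [hsdef, cfc_apply f z hnormal hfcont, cfcHom_eq_of_isStarNormal]
    exact SetLike.coe_mem _
  have hssa : star s = s := by
    rw [hsdef, ← cfc_star f z]
    exact cfc_congr fun w _ => by simp [hfdef, Complex.star_def, Complex.conj_ofReal]
  have hss1 : s * s * z = 1 := by
    have e1 : cfc (fun w => f w * f w * w) z = cfc (fun w => f w * f w) z * cfc id z :=
      cfc_mul _ id z (hfcont.mul hfcont) continuousOn_id
    rw [cfc_id ℂ z hnormal] at e1
    have e2 : cfc (fun w => f w * f w) z = s * s := cfc_mul f f z hfcont hfcont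
    have e3 : cfc (fun w => f w * f w * w) z = 1 := by
      have hEq : (spectrum ℂ z).EqOn (fun w => f w * f w * w) 1 := by
        intro w hw
        obtain ⟨h1, h2⟩ := hspec w hw
        show (↑(Real.sqrt (w.re)⁻¹) * ↑(Real.sqrt (w.re)⁻¹) * w : ℂ) = 1
        rw [← h1]
        norm_cast
        rw [Real.mul_self_sqrt (inv_nonneg.mpr h2.le), inv_mul_cancel₀ (ne_of_gt h2)]
      rw [cfc_congr hEq, cfc_one ℂ z hnormal]
    rw [e1, e2] at e3
    exact e3
  -- commutation properties of s
  have hcomm : ∀ y : H →L[ℂ] H, Commute z y → Commute s y := fun y hy =>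
    aux_commute_of_mem_elemental hzsa hs_elem hy
  have hzq_comm : Commute z q := by rw [Commute, SemiconjBy, hzq, hqz]
  have hsq : Commute s q := hcomm q hzq_comm
  have hzs : Commute s z := hcomm z (Commute.refl z)
  have hsM : s ∈ M := by
    have hx : s ∈ Set.centralizer (Set.centralizer (M : Set (H →L[ℂ] H))) := by
      rw [Set.mem_centralizer_iff]
      intro g hg
      have hzg : Commute z g := hg z hzM
      exact ((hcomm g hzg).symm).eq
    rw [M.centralizer_centralizer] at hx
    exact hx
  -- the partial isometry
  have huM : star a * s ∈ M := mul_mem ha'M hsM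
  have hstaru : star (star a * s) = s * a := by rw [star_mul, star_star, hssa]
  have hzr : z * (s * s) = 1 := by
    have hc : Commute z (s * s) := hzs.symm.mul_right hzs.symm
    rw [hc.eq]
    exact hss1
  have hr1q : s * s * (1 - q) = 1 - q := by
    calc s * s * (1 - q) = s * s * (z * (1 - q)) := by rw [hz1q]
      _ = s * s * z * (1 - q) := (mul_assoc (s * s) z (1 - q)).symm
      _ = 1 - q := by rw [hss1, one_mul]
  have h1q_s : Commute (1 - q) s := (Commute.one_left s).sub_left hsq.symm
  have e4 : s * z * s = 1 := by
    rw [hzs.eq, mul_assoc]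
    exact hzr
  have e5 : s * (1 - q) * s = (1 - q) * (s * s) := by rw [← h1q_s.eq, mul_assoc]
  have hA1 : star (star a * s) * (star a * s) = q := by
    rw [hstaru]
    calc s * a * (star a * s)
        = s * (a * star a) * s := by rw [← mul_assoc, mul_assoc s a (star a)]
      _ = s * (z - (1 - q)) * s := by rw [haa']
      _ = s * z * s - s * (1 - q) * s := by rw [mul_sub, sub_mul]
      _ = 1 - (1 - q) * (s * s) := by rw [e4, e5]
      _ = 1 - s * s * (1 - q) := by rw [(h1q_s.mul_right h1q_s).eq]
      _ = 1 - (1 - q) := by rw [hr1q]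
      _ = q := by rw [sub_sub_cancel]
  have hwa' : star a * (s * s) * a * star a = star a := by
    calc star a * (s * s) * a * star a
        = star a * ((s * s) * (a * star a)) := by noncomm_ring
      _ = star a * ((s * s) * (z - (1 - q))) := by rw [haa']
      _ = star a * (s * s * z - s * s * (1 - q)) := by rw [mul_sub]
      _ = star a * (1 - (1 - q)) := by rw [hss1, hr1q]
      _ = star a * q := by rw [sub_sub_cancel]
      _ = star a := ha'q
  have hpw : p * (star a * (s * s) * a) = star a * (s * s) * a := by
    calc p * (star a * (s * s) * a)
        = (p * star a) * ((s * s) * a) := by noncomm_ring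
      _ = star a * ((s * s) * a) := by rw [hpa']
      _ = star a * (s * s) * a := by noncomm_ring
  have hwp : star a * (s * s) * a * p = p := by
    conv_lhs => rw [← ha'p]
    rw [← mul_assoc, hwa', ha'p]
  have hws : star (star a * (s * s) * a) = star a * (s * s) * a := by
    simp only [star_mul, star_star, hssa]
    noncomm_ring
  have h5 : star a * (s * s) * a * p = star a * (s * s) * a := by
    have h6 := congrArg star hpw
    rw [star_mul, hws, hpstar] at h6
    exact h6
  have hw : star a * (s * s) * a = p := by
    rw [← h5, hwp]
  have hA2 : (star a * s) * star (star a * s) = p := by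
    rw [hstaru, ← hw]
    noncomm_ring
  exact ⟨star a * s, huM, hA1, hA2⟩
end

section
/- Let p and q be orthogonal projections on a complex Hilbert space H, and let B(H) denote the space of bounded operators on H. Then B(H) is the internal direct sum of the subspaces qB(H) = {x : q ∘ x = x} and (1−p)B(H) = {x : (1−p) ∘ x = x} (i.e. their intersection is {0} and their sum is B(H)) if and only if H is the internal direct sum of the closed subspaces qH and (1−p)H (i.e. qH ∩ (1−p)H = {0} and qH + (1−p)H = H). -/
set_option maxHeartbeats 1600000

/-- For orthogonal projections `p`, `q` on a complex Hilbert space `H`, the space `B(H)` of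
bounded operators is the internal direct sum of the subspaces `qB(H) = {x : q∘x = x}` and
`(1-p)B(H) = {x : (1-p)∘x = x}` if and only if `H` is the internal direct sum of the closed
subspaces `qH` and `(1-p)H`. -/
theorem operator_splitting_iff_hilbert_splitting {H : Type*} [NormedAddCommGroup H]
    [InnerProductSpace ℂ H] [CompleteSpace H] (p q : H →L[ℂ] H)
    (hp : IsSelfAdjoint p) (hp2 : p * p = p) (hq : IsSelfAdjoint q) (hq2 : q * q = q) :
    (({x : H →L[ℂ] H | q * x = x} ∩ {x : H →L[ℂ] H | (1 - p) * x = x} = {0}) ∧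
        ∀ x : H →L[ℂ] H, ∃ a b : H →L[ℂ] H, q * a = a ∧ (1 - p) * b = b ∧ x = a + b) ↔
      IsCompl (LinearMap.range (q : H →ₗ[ℂ] H)) (LinearMap.range ((1 - p : H →L[ℂ] H) : H →ₗ[ℂ] H)) := by
  have hp2' : (1 - p) * (1 - p) = 1 - p := by
    have : (1 - p) * (1 - p) = 1 - p - (p - p * p) := by noncomm_ring
    rw [hp2] at this; simpa using this
  -- fixed points of an idempotent = its range
  have hfix : ∀ (e : H →L[ℂ] H), e * e = e → ∀ v ∈ LinearMap.range (e : H →ₗ[ℂ] H), e v = v := by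
    rintro e he v ⟨w, rfl⟩
    have := congrFun (congrArg (fun f : H →L[ℂ] H => (f : H → H)) he) w
    simpa [ContinuousLinearMap.mul_apply] using this
  have hmem : ∀ (e : H →L[ℂ] H) (v : H), e v = v → v ∈ LinearMap.range (e : H →ₗ[ℂ] H) :=
    fun e v hv => ⟨v, hv⟩
  constructor
  · rintro ⟨hdisj, hsum⟩
    constructor
    · rw [Submodule.disjoint_def]
      intro v hvq hvp
      -- rank one map u ↦ ⟪v,u⟫ • v
      set x : H →L[ℂ] H := (innerSL ℂ v).smulRight v with hx
      have hqv : q v = v := hfix q hq2 v hvq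
      have hpv : (1 - p) v = v := hfix (1 - p) hp2' v hvp
      have h1 : q * x = x := by
        ext u
        simp [hx, ContinuousLinearMap.mul_apply, hqv]
      have h2 : (1 - p) * x = x := by
        ext u
        simp only [ContinuousLinearMap.mul_apply, hx,
          ContinuousLinearMap.smulRight_apply, map_smul, hpv]
      have hx0 : x = 0 := by
        have : x ∈ ({(0 : H →L[ℂ] H)} : Set (H →L[ℂ] H)) := by
          rw [← hdisj]; exact ⟨h1, h2⟩
        simpa using this
      have : (inner ℂ v v : ℂ) • v = 0 := by
        have := congrFun (congrArg (fun f : H →L[ℂ] H => (f : H → H)) hx0) v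
        simpa [hx] using this
      by_contra hv0
      have hvv : (inner ℂ v v : ℂ) ≠ 0 := by
        simpa [inner_self_eq_zero] using hv0
      exact hv0 (by simpa [smul_eq_zero, hvv] using this)
    · rw [codisjoint_iff, eq_top_iff]
      intro v _
      by_cases hv0 : v = 0
      · simp [hv0]
      · set x : H →L[ℂ] H := (innerSL ℂ v).smulRight v with hx
        obtain ⟨a, b, ha, hb, hab⟩ := hsum x
        have hav : a v ∈ LinearMap.range (q : H →ₗ[ℂ] H) := by
          refine ⟨a v, ?_⟩
          have := congrFun (congrArg (fun f : H →L[ℂ] H => (f : H → H)) ha) v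
          simpa [ContinuousLinearMap.mul_apply] using this
        have hbv : b v ∈ LinearMap.range ((1 - p : H →L[ℂ] H) : H →ₗ[ℂ] H) := by
          refine ⟨b v, ?_⟩
          have := congrFun (congrArg (fun f : H →L[ℂ] H => (f : H → H)) hb) v
          simpa [ContinuousLinearMap.mul_apply] using this
        have hxv : x v = a v + b v := by rw [hab]; simp
        have hvv : (inner ℂ v v : ℂ) ≠ 0 := by
          simpa [inner_self_eq_zero] using hv0
        have hveq : v = (inner ℂ v v : ℂ)⁻¹ • (a v + b v) := by
          rw [← hxv]
          simp only [hx, ContinuousLinearMap.smulRight_apply, innerSL_apply_apply]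
          rw [smul_smul, inv_mul_cancel₀ hvv, one_smul]
        rw [hveq]
        exact Submodule.smul_mem _ _ (Submodule.add_mem_sup hav hbv)
  · intro hcompl
    have hclq : IsClosed ((LinearMap.range (q : H →ₗ[ℂ] H) : Submodule ℂ H) : Set H) := by
      have : (LinearMap.range (q : H →ₗ[ℂ] H) : Submodule ℂ H) = LinearMap.ker ((1 - q : H →L[ℂ] H) : H →ₗ[ℂ] H) := by
        ext v
        constructor
        · intro hv
          have := hfix q hq2 v hv
          simp [LinearMap.mem_ker, this]
        · intro hv
          simp only [LinearMap.mem_ker, ContinuousLinearMap.coe_coe, ContinuousLinearMap.sub_apply,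
            ContinuousLinearMap.one_apply, sub_eq_zero] at hv
          exact ⟨v, hv.symm⟩
      rw [this]
      exact ContinuousLinearMap.isClosed_ker _
    have hclp : IsClosed ((LinearMap.range ((1 - p : H →L[ℂ] H) : H →ₗ[ℂ] H) : Submodule ℂ H) : Set H) := by
      have : (LinearMap.range ((1 - p : H →L[ℂ] H) : H →ₗ[ℂ] H) : Submodule ℂ H) = LinearMap.ker (p : H →ₗ[ℂ] H) := by
        ext v
        constructor
        · intro hv
          have := hfix (1 - p) hp2' v hv
          simp only [ContinuousLinearMap.sub_apply, ContinuousLinearMap.one_apply] at this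
          simp only [LinearMap.mem_ker, ContinuousLinearMap.coe_coe]
          have : p v = v - (v - p v) := by abel
          rw [this]
          have h2 : v - p v = v := by
            have := hfix (1 - p) hp2' v hv
            simpa [ContinuousLinearMap.sub_apply] using this
          rw [h2]; abel
        · intro hv
          simp only [LinearMap.mem_ker] at hv
          exact ⟨v, by simp [ContinuousLinearMap.sub_apply, hv]⟩
      rw [this]
      exact ContinuousLinearMap.isClosed_ker _
    constructor
    · ext x
      simp only [Set.mem_inter_iff, Set.mem_setOf_eq, Set.mem_singleton_iff]
      constructor
      · rintro ⟨h1, h2⟩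
        ext u
        have hu1 : x u ∈ LinearMap.range (q : H →ₗ[ℂ] H) := by
          refine ⟨x u, ?_⟩
          have := congrFun (congrArg (fun f : H →L[ℂ] H => (f : H → H)) h1) u
          simpa [ContinuousLinearMap.mul_apply] using this
        have hu2 : x u ∈ LinearMap.range ((1 - p : H →L[ℂ] H) : H →ₗ[ℂ] H) := by
          refine ⟨x u, ?_⟩
          have := congrFun (congrArg (fun f : H →L[ℂ] H => (f : H → H)) h2) u
          simpa [ContinuousLinearMap.mul_apply] using this
        have := Submodule.disjoint_def.mp hcompl.disjoint _ hu1 hu2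
        simpa using this
      · rintro rfl; simp
    · intro x
      set P : H →L[ℂ] (LinearMap.range (q : H →ₗ[ℂ] H) : Submodule ℂ H) :=
        (LinearMap.range (q : H →ₗ[ℂ] H) : Submodule ℂ H).linearProjOfClosedCompl
          (LinearMap.range ((1 - p : H →L[ℂ] H) : H →ₗ[ℂ] H)) hcompl hclq hclp with hP
      set π : H →L[ℂ] H := (LinearMap.range (q : H →ₗ[ℂ] H) : Submodule ℂ H).subtypeL ∘L P with hπ
      refine ⟨π ∘L x, x - π ∘L x, ?_, ?_, by abel⟩
      · ext u
        exact hfix q hq2 _ (Submodule.coe_mem (P (x u)))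
      · ext u
        have hmem' : x u - (P (x u) : H) ∈ LinearMap.range ((1 - p : H →L[ℂ] H) : H →ₗ[ℂ] H) := by
          have h1 : (P (x u) : H) = ((LinearMap.range (q : H →ₗ[ℂ] H) : Submodule ℂ H).projectionOnto
              (LinearMap.range ((1 - p : H →L[ℂ] H) : H →ₗ[ℂ] H)) hcompl (x u) : H) := by
            rw [hP, Submodule.coe_continuous_linearProjOfClosedCompl']
          have h2 := Submodule.projection_add_projection_eq_self hcompl (x u)
          rw [h1]
          have h3 : x u - (((LinearMap.range (q : H →ₗ[ℂ] H) : Submodule ℂ H).projectionOnto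
              (LinearMap.range ((1 - p : H →L[ℂ] H) : H →ₗ[ℂ] H)) hcompl) (x u) : H) =
              (((LinearMap.range ((1 - p : H →L[ℂ] H) : H →ₗ[ℂ] H)).projectionOnto
                (LinearMap.range (q : H →ₗ[ℂ] H)) hcompl.symm) (x u) : H) := by
            exact sub_eq_of_eq_add' h2.symm
          rw [h3]
          exact Submodule.coe_mem _
        have := hfix (1 - p) hp2' _ hmem'
        calc ((1 - p) * (x - π ∘L x)) u = (1 - p) (x u - (P (x u) : H)) := rfl
          _ = x u - (P (x u) : H) := this
          _ = (x - π ∘L x) u := rfl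
end

section
/- Let f and g belong to P∞, the class of smooth functions on X × U whose second partial derivative lies pointwise in ι(X). Then the bracket {f,g}(φ,η) := D₂g(φ,η)(D₁f(φ,η)) − D₂f(φ,η)(D₁g(φ,η)) is smooth on X × U and again belongs to P∞, i.e. D₂{f,g}(φ,η) ∈ ι(X) for all (φ,η) ∈ X × U. -/
set_option maxHeartbeats 4000000


open NormedSpace Topology Filter

variable {X : Type*} [NormedAddCommGroup X] [NormedSpace ℂ X]

/-- The first partial Fréchet derivative `D₁f(φ,η) ∈ X* = E` of `f : X × E → ℂ`. -/
noncomputable def D1 (f : X × StrongDual ℂ X → ℂ) (p : X × StrongDual ℂ X) : StrongDual ℂ X :=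
  (fderiv ℂ f p).comp (ContinuousLinearMap.inl ℂ X (StrongDual ℂ X))

/-- The second partial Fréchet derivative `D₂f(φ,η) ∈ E*` of `f : X × E → ℂ`. -/
noncomputable def D2 (f : X × StrongDual ℂ X → ℂ) (p : X × StrongDual ℂ X) : StrongDual ℂ (StrongDual ℂ X) :=
  (fderiv ℂ f p).comp (ContinuousLinearMap.inr ℂ X (StrongDual ℂ X))

/-- The canonical Poisson bracket
`{f,g}(φ,η) = D₂g(φ,η)(D₁f(φ,η)) − D₂f(φ,η)(D₁g(φ,η))`. -/
noncomputable def pBracket (f g : X × StrongDual ℂ X → ℂ) (p : X × StrongDual ℂ X) : ℂ :=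
  D2 g p (D1 f p) - D2 f p (D1 g p)

/-- The range of the canonical inclusion into the double dual is norm-closed (for `X`
complete), since the inclusion is an isometry. -/
lemma isClosed_range_iota {X : Type*} [NormedAddCommGroup X] [NormedSpace ℂ X]
    [CompleteSpace X] : IsClosed (Set.range ⇑(inclusionInDoubleDual ℂ X)) := by
  have h : IsClosed (Set.range ⇑(inclusionInDoubleDualLi ℂ (E := X))) :=
    ((inclusionInDoubleDualLi ℂ (E := X)).isometry.isClosedEmbedding
      (γ := StrongDual ℂ (StrongDual ℂ X))).isClosed_range
  exact h

/-- If a map into the double dual takes values in `ι(X)` on an open set, then its Fréchet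
derivative (at a point of that set) also takes values in `ι(X)`: difference quotients lie in
the subspace `ι(X)`, which is closed. -/
lemma fderiv_mem_range_iota {X : Type*} [NormedAddCommGroup X] [NormedSpace ℂ X]
    [CompleteSpace X] {G : Type*} [NormedAddCommGroup G] [NormedSpace ℂ G]
    {h : G → StrongDual ℂ (StrongDual ℂ X)} {p : G} {s : Set G} (hs : IsOpen s) (hp : p ∈ s)
    (hh : DifferentiableAt ℂ h p)
    (hmem : ∀ q ∈ s, h q ∈ Set.range ⇑(inclusionInDoubleDual ℂ X)) (v : G) :
    fderiv ℂ h p v ∈ Set.range ⇑(inclusionInDoubleDual ℂ X) := by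
  have hl : HasLineDerivAt ℂ h (fderiv ℂ h p v) p v := hh.hasFDerivAt.hasLineDerivAt v
  have ht := hl.tendsto_slope_zero
  refine isClosed_range_iota.mem_of_tendsto ht ?_
  have hcont : Continuous (fun t : ℂ => p + t • v) := by continuity
  have htd : Filter.Tendsto (fun t : ℂ => p + t • v) (𝓝 0) (𝓝 p) := by
    have := hcont.tendsto 0
    simpa using this
  have hev : ∀ᶠ t : ℂ in 𝓝 0, p + t • v ∈ s := htd (hs.mem_nhds hp)
  filter_upwards [hev.filter_mono nhdsWithin_le_nhds] with t htm
  obtain ⟨a, ha⟩ := hmem _ htm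
  obtain ⟨b, hb⟩ := hmem p hp
  exact ⟨t⁻¹ • (a - b), by rw [map_smul, map_sub, ha, hb]⟩

/-- If `f, g` belong to `P∞` (smooth on `X × U` with second partial derivative pointwise in
`ι(X)`), then `{f,g}` is smooth on `X × U` and again belongs to `P∞`. -/
theorem pBracket_mem_Pinfty
    {X : Type*} [NormedAddCommGroup X] [NormedSpace ℂ X] [CompleteSpace X]
    (U : Set (StrongDual ℂ X)) (hU : IsOpen U) (f g : X × StrongDual ℂ X → ℂ)
    (hf : ContDiffOn ℂ (⊤ : ℕ∞) f (Set.univ ×ˢ U))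
    (hg : ContDiffOn ℂ (⊤ : ℕ∞) g (Set.univ ×ˢ U))
    (hfP : ∀ p ∈ Set.univ ×ˢ U, D2 f p ∈ Set.range ⇑(inclusionInDoubleDual ℂ X))
    (hgP : ∀ p ∈ Set.univ ×ˢ U, D2 g p ∈ Set.range ⇑(inclusionInDoubleDual ℂ X)) :
    ContDiffOn ℂ (⊤ : ℕ∞) (pBracket f g) (Set.univ ×ˢ U) ∧
      ∀ p ∈ Set.univ ×ˢ U, D2 (pBracket f g) p ∈ Set.range ⇑(inclusionInDoubleDual ℂ X) := by
  classical
  set s : Set (X × StrongDual ℂ X) := Set.univ ×ˢ U with hs_def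
  have hs : IsOpen s := isOpen_univ.prod hU
  -- the full derivative maps are smooth on s
  have hf' : ContDiffOn ℂ (⊤ : ℕ∞) (fderiv ℂ f) s := hf.fderiv_of_isOpen hs (by simp)
  have hg' : ContDiffOn ℂ (⊤ : ℕ∞) (fderiv ℂ g) s := hg.fderiv_of_isOpen hs (by simp)
  have hD1f : ContDiffOn ℂ (⊤ : ℕ∞) (D1 f) s := hf'.clm_comp contDiffOn_const
  have hD1g : ContDiffOn ℂ (⊤ : ℕ∞) (D1 g) s := hg'.clm_comp contDiffOn_const
  have hD2f : ContDiffOn ℂ (⊤ : ℕ∞) (D2 f) s := hf'.clm_comp contDiffOn_const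
  have hD2g : ContDiffOn ℂ (⊤ : ℕ∞) (D2 g) s := hg'.clm_comp contDiffOn_const
  constructor
  · -- smoothness of the bracket
    exact (hD2g.clm_apply hD1f).sub (hD2f.clm_apply hD1g)
  · -- membership of D2 of the bracket in ι(X)
    intro p hp
    obtain ⟨xf, hxf⟩ := hfP p hp
    obtain ⟨xg, hxg⟩ := hgP p hp
    have hnh : s ∈ 𝓝 p := hs.mem_nhds hp
    -- second derivatives
    have hFf : DifferentiableAt ℂ (fderiv ℂ f) p :=
      (hf'.contDiffAt hnh).differentiableAt (by norm_cast)
    have hFg : DifferentiableAt ℂ (fderiv ℂ g) p :=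
      (hg'.contDiffAt hnh).differentiableAt (by norm_cast)
    have HFf : HasFDerivAt (fderiv ℂ f) (fderiv ℂ (fderiv ℂ f) p) p := hFf.hasFDerivAt
    have HFg : HasFDerivAt (fderiv ℂ g) (fderiv ℂ (fderiv ℂ g) p) p := hFg.hasFDerivAt
    -- symmetry of second derivatives
    have h2top : (2 : WithTop ℕ∞) ≤ ((⊤ : ℕ∞) : WithTop ℕ∞) := by
      norm_cast
    have symf' : IsSymmSndFDerivAt ℂ f p := (hf.contDiffAt hnh).isSymmSndFDerivAt (by rw [minSmoothness_of_isRCLikeNormedField]; exact h2top)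
    have symg' : IsSymmSndFDerivAt ℂ g p := (hg.contDiffAt hnh).isSymmSndFDerivAt (by rw [minSmoothness_of_isRCLikeNormedField]; exact h2top)
    have symf : ∀ a b, (fderiv ℂ (fderiv ℂ f) p) a b = (fderiv ℂ (fderiv ℂ f) p) b a := fun a b => symf' a b
    have symg : ∀ a b, (fderiv ℂ (fderiv ℂ g) p) a b = (fderiv ℂ (fderiv ℂ g) p) b a := fun a b => symg' a b
    -- pre-composition operators
    set preinl : ((X × StrongDual ℂ X) →L[ℂ] ℂ) →L[ℂ] (X →L[ℂ] ℂ) :=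
      (ContinuousLinearMap.compL ℂ X (X × StrongDual ℂ X) ℂ).flip (ContinuousLinearMap.inl ℂ X (StrongDual ℂ X))
      with hpreinl
    set preinr : ((X × StrongDual ℂ X) →L[ℂ] ℂ) →L[ℂ] ((StrongDual ℂ X) →L[ℂ] ℂ) :=
      (ContinuousLinearMap.compL ℂ (StrongDual ℂ X) (X × StrongDual ℂ X) ℂ).flip (ContinuousLinearMap.inr ℂ X (StrongDual ℂ X))
      with hpreinr
    have eD1f : D1 f = fun q => preinl (fderiv ℂ f q) := rfl
    have eD1f' : D1 f = fun q => (fderiv ℂ f q).comp (ContinuousLinearMap.inl ℂ X (StrongDual ℂ X)) := rfl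
    have eD1g' : D1 g = fun q => (fderiv ℂ g q).comp (ContinuousLinearMap.inl ℂ X (StrongDual ℂ X)) := rfl
    have eD2f' : D2 f = fun q => (fderiv ℂ f q).comp (ContinuousLinearMap.inr ℂ X (StrongDual ℂ X)) := rfl
    have eD2g' : D2 g = fun q => (fderiv ℂ g q).comp (ContinuousLinearMap.inr ℂ X (StrongDual ℂ X)) := rfl
    have eD1g : D1 g = fun q => preinl (fderiv ℂ g q) := rfl
    have eD2f : D2 f = fun q => preinr (fderiv ℂ f q) := rfl
    have eD2g : D2 g = fun q => preinr (fderiv ℂ g q) := rfl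
    -- derivatives of the partial-derivative maps
    have hinl : HasFDerivAt (fun _ : X × StrongDual ℂ X => ContinuousLinearMap.inl ℂ X (StrongDual ℂ X))
        (0 : (X × StrongDual ℂ X) →L[ℂ] (X →L[ℂ] (X × StrongDual ℂ X))) p := hasFDerivAt_const _ p
    have hinr : HasFDerivAt (fun _ : X × StrongDual ℂ X => ContinuousLinearMap.inr ℂ X (StrongDual ℂ X))
        (0 : (X × StrongDual ℂ X) →L[ℂ] ((StrongDual ℂ X) →L[ℂ] (X × StrongDual ℂ X))) p := hasFDerivAt_const _ p
    have huf : HasFDerivAt (D1 f) (preinl.comp (fderiv ℂ (fderiv ℂ f) p)) p := by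
      have h := HFf.clm_comp hinl
      rw [eD1f']
      simpa [hpreinl] using h
    have hug : HasFDerivAt (D1 g) (preinl.comp (fderiv ℂ (fderiv ℂ g) p)) p := by
      have h := HFg.clm_comp hinl
      rw [eD1g']
      simpa [hpreinl] using h
    have hcf : HasFDerivAt (D2 f) (preinr.comp (fderiv ℂ (fderiv ℂ f) p)) p := by
      have h := HFf.clm_comp hinr
      rw [eD2f']
      simpa [hpreinr] using h
    have hcg : HasFDerivAt (D2 g) (preinr.comp (fderiv ℂ (fderiv ℂ g) p)) p := by
      have h := HFg.clm_comp hinr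
      rw [eD2g']
      simpa [hpreinr] using h
    -- derivative of the bracket
    have hbr : HasFDerivAt (pBracket f g)
        (((D2 g p).comp (preinl.comp (fderiv ℂ (fderiv ℂ f) p)) + (preinr.comp (fderiv ℂ (fderiv ℂ g) p)).flip (D1 f p)) -
          ((D2 f p).comp (preinl.comp (fderiv ℂ (fderiv ℂ g) p)) + (preinr.comp (fderiv ℂ (fderiv ℂ f) p)).flip (D1 g p))) p := by
      have h1 := hcg.clm_apply huf
      have h2 := hcf.clm_apply hug
      exact h1.sub h2
    -- the four pieces, all in ι(X)
    have keyf : ∀ v, (preinr.comp (fderiv ℂ (fderiv ℂ f) p)) v ∈ Set.range ⇑(inclusionInDoubleDual ℂ X) := by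
      intro v
      have := fderiv_mem_range_iota hs hp hcf.differentiableAt hfP v
      rwa [hcf.fderiv] at this
    have keyg : ∀ v, (preinr.comp (fderiv ℂ (fderiv ℂ g) p)) v ∈ Set.range ⇑(inclusionInDoubleDual ℂ X) := by
      intro v
      have := fderiv_mem_range_iota hs hp hcg.differentiableAt hgP v
      rwa [hcg.fderiv] at this
    obtain ⟨a1, ha1⟩ := keyg ((0 : X), D1 f p)
    obtain ⟨a2, ha2⟩ := keyf (xg, (0 : StrongDual ℂ X))
    obtain ⟨a3, ha3⟩ := keyf ((0 : X), D1 g p)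
    obtain ⟨a4, ha4⟩ := keyg (xf, (0 : StrongDual ℂ X))
    refine ⟨a2 + a1 - (a4 + a3), ?_⟩
    ext w
    have hRHS : D2 (pBracket f g) p w =
        (D2 g p) ((preinl.comp (fderiv ℂ (fderiv ℂ f) p)) ((0 : X), w))
          + (preinr.comp (fderiv ℂ (fderiv ℂ g) p)) ((0 : X), w) (D1 f p)
          - ((D2 f p) ((preinl.comp (fderiv ℂ (fderiv ℂ g) p)) ((0 : X), w))
            + (preinr.comp (fderiv ℂ (fderiv ℂ f) p)) ((0 : X), w) (D1 g p)) := by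
      rw [show D2 (pBracket f g) p w = fderiv ℂ (pBracket f g) p ((0 : X), w) from rfl,
        hbr.fderiv]
      rfl
    have e1 : (D2 g p) ((preinl.comp (fderiv ℂ (fderiv ℂ f) p)) ((0 : X), w)) = w a2 := by
      calc (D2 g p) ((preinl.comp (fderiv ℂ (fderiv ℂ f) p)) ((0 : X), w))
          = inclusionInDoubleDual ℂ X xg
              (((fderiv ℂ (fderiv ℂ f) p) ((0 : X), w)).comp
                (ContinuousLinearMap.inl ℂ X (StrongDual ℂ X))) := by rw [← hxg]; rfl
        _ = (fderiv ℂ (fderiv ℂ f) p) ((0 : X), w) (xg, (0 : StrongDual ℂ X)) := rfl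
        _ = (fderiv ℂ (fderiv ℂ f) p) (xg, (0 : StrongDual ℂ X)) ((0 : X), w) := symf _ _
        _ = (preinr.comp (fderiv ℂ (fderiv ℂ f) p)) (xg, (0 : StrongDual ℂ X)) w := rfl
        _ = inclusionInDoubleDual ℂ X a2 w := by rw [ha2]
        _ = w a2 := rfl
    have e2 : (preinr.comp (fderiv ℂ (fderiv ℂ g) p)) ((0 : X), w) (D1 f p) = w a1 := by
      calc (preinr.comp (fderiv ℂ (fderiv ℂ g) p)) ((0 : X), w) (D1 f p)
          = (fderiv ℂ (fderiv ℂ g) p) ((0 : X), w) ((0 : X), D1 f p) := rfl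
        _ = (fderiv ℂ (fderiv ℂ g) p) ((0 : X), D1 f p) ((0 : X), w) := symg _ _
        _ = (preinr.comp (fderiv ℂ (fderiv ℂ g) p)) ((0 : X), D1 f p) w := rfl
        _ = inclusionInDoubleDual ℂ X a1 w := by rw [ha1]
        _ = w a1 := rfl
    have e3 : (D2 f p) ((preinl.comp (fderiv ℂ (fderiv ℂ g) p)) ((0 : X), w)) = w a4 := by
      calc (D2 f p) ((preinl.comp (fderiv ℂ (fderiv ℂ g) p)) ((0 : X), w))
          = inclusionInDoubleDual ℂ X xf
              (((fderiv ℂ (fderiv ℂ g) p) ((0 : X), w)).comp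
                (ContinuousLinearMap.inl ℂ X (StrongDual ℂ X))) := by rw [← hxf]; rfl
        _ = (fderiv ℂ (fderiv ℂ g) p) ((0 : X), w) (xf, (0 : StrongDual ℂ X)) := rfl
        _ = (fderiv ℂ (fderiv ℂ g) p) (xf, (0 : StrongDual ℂ X)) ((0 : X), w) := symg _ _
        _ = (preinr.comp (fderiv ℂ (fderiv ℂ g) p)) (xf, (0 : StrongDual ℂ X)) w := rfl
        _ = inclusionInDoubleDual ℂ X a4 w := by rw [ha4]
        _ = w a4 := rfl
    have e4 : (preinr.comp (fderiv ℂ (fderiv ℂ f) p)) ((0 : X), w) (D1 g p) = w a3 := by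
      calc (preinr.comp (fderiv ℂ (fderiv ℂ f) p)) ((0 : X), w) (D1 g p)
          = (fderiv ℂ (fderiv ℂ f) p) ((0 : X), w) ((0 : X), D1 g p) := rfl
        _ = (fderiv ℂ (fderiv ℂ f) p) ((0 : X), D1 g p) ((0 : X), w) := symf _ _
        _ = (preinr.comp (fderiv ℂ (fderiv ℂ f) p)) ((0 : X), D1 g p) w := rfl
        _ = inclusionInDoubleDual ℂ X a3 w := by rw [ha3]
        _ = w a3 := rfl
    calc inclusionInDoubleDual ℂ X (a2 + a1 - (a4 + a3)) w
        = w (a2 + a1 - (a4 + a3)) := rfl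
      _ = w a2 + w a1 - (w a4 + w a3) := by rw [map_sub, map_add, map_add]
      _ = D2 (pBracket f g) p w := by rw [hRHS, e1, e2, e3, e4]
end

section
/- Let f, g and h belong to P∞, the class of smooth functions on X × U whose second partial derivative lies pointwise in ι(X). Then the Jacobi identity holds: {{f,g},h} + {{g,h},f} + {{h,f},g} = 0 at every point of X × U, where {·,·} is the canonical Poisson bracket. -/
set_option maxHeartbeats 1000000


open NormedSpace

variable {X : Type*} [NormedAddCommGroup X] [NormedSpace ℂ X]

open ContinuousLinearMap in
theorem pBracket_aux
    {X : Type*} [NormedAddCommGroup X] [NormedSpace ℂ X]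
    (U : Set (StrongDual ℂ X)) (hU : IsOpen U) (f g h : X × StrongDual ℂ X → ℂ)
    (hf : ContDiffOn ℂ (⊤ : ℕ∞) f (Set.univ ×ˢ U))
    (hg : ContDiffOn ℂ (⊤ : ℕ∞) g (Set.univ ×ˢ U))
    {p : X × StrongDual ℂ X} (hp : p ∈ Set.univ ×ˢ U)
    (F G H : X)
    (hF : D2 f p = inclusionInDoubleDual ℂ X F)
    (hG : D2 g p = inclusionInDoubleDual ℂ X G)
    (hH : D2 h p = inclusionInDoubleDual ℂ X H) :
    pBracket (pBracket f g) h p =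
      fderiv ℂ (fderiv ℂ f) p (-H, D1 h p) (-G, D1 g p)
        - fderiv ℂ (fderiv ℂ g) p (-H, D1 h p) (-F, D1 f p) := by
  have hΩ : IsOpen ((Set.univ : Set X) ×ˢ U) := isOpen_univ.prod hU
  have hnb : (Set.univ : Set X) ×ˢ U ∈ nhds p := hΩ.mem_nhds hp
  have hfd : ContDiffOn ℂ (⊤ : ℕ∞) (fderiv ℂ f) (Set.univ ×ˢ U) :=
    ((contDiffOn_infty_iff_fderiv_of_isOpen hΩ).1 hf).2
  have hgd : ContDiffOn ℂ (⊤ : ℕ∞) (fderiv ℂ g) (Set.univ ×ˢ U) :=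
    ((contDiffOn_infty_iff_fderiv_of_isOpen hΩ).1 hg).2
  have hf'' : HasFDerivAt (fderiv ℂ f) (fderiv ℂ (fderiv ℂ f) p) p :=
    (((hfd.differentiableOn (by norm_cast)).differentiableAt hnb)).hasFDerivAt
  have hg'' : HasFDerivAt (fderiv ℂ g) (fderiv ℂ (fderiv ℂ g) p) p :=
    (((hgd.differentiableOn (by norm_cast)).differentiableAt hnb)).hasFDerivAt
  set f'' := fderiv ℂ (fderiv ℂ f) p with hf''def
  set g'' := fderiv ℂ (fderiv ℂ g) p with hg''def
  -- post-composition operators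
  set Rr : ((X × StrongDual ℂ X) →L[ℂ] ℂ) →L[ℂ] (StrongDual ℂ X →L[ℂ] ℂ) :=
    (compL ℂ (StrongDual ℂ X) (X × StrongDual ℂ X) ℂ).flip (inr ℂ X (StrongDual ℂ X)) with hRr
  set Rl : ((X × StrongDual ℂ X) →L[ℂ] ℂ) →L[ℂ] (X →L[ℂ] ℂ) :=
    (compL ℂ X (X × StrongDual ℂ X) ℂ).flip (inl ℂ X (StrongDual ℂ X)) with hRl
  have hD2g : HasFDerivAt (D2 g) (Rr.comp g'') p := by
    have h1 := hg''.clm_comp (hasFDerivAt_const (inr ℂ X (StrongDual ℂ X)) p)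
    have h2 : HasFDerivAt (fun y => (fderiv ℂ g y).comp (inr ℂ X (StrongDual ℂ X)))
        (Rr.comp g'') p := by simpa [hRr] using h1
    exact h2
  have hD2f : HasFDerivAt (D2 f) (Rr.comp f'') p := by
    have h1 := hf''.clm_comp (hasFDerivAt_const (inr ℂ X (StrongDual ℂ X)) p)
    have h2 : HasFDerivAt (fun y => (fderiv ℂ f y).comp (inr ℂ X (StrongDual ℂ X)))
        (Rr.comp f'') p := by simpa [hRr] using h1
    exact h2
  have hD1f : HasFDerivAt (D1 f) (Rl.comp f'') p := by
    have h1 := hf''.clm_comp (hasFDerivAt_const (inl ℂ X (StrongDual ℂ X)) p)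
    have h2 : HasFDerivAt (fun y => (fderiv ℂ f y).comp (inl ℂ X (StrongDual ℂ X)))
        (Rl.comp f'') p := by simpa [hRl] using h1
    exact h2
  have hD1g : HasFDerivAt (D1 g) (Rl.comp g'') p := by
    have h1 := hg''.clm_comp (hasFDerivAt_const (inl ℂ X (StrongDual ℂ X)) p)
    have h2 : HasFDerivAt (fun y => (fderiv ℂ g y).comp (inl ℂ X (StrongDual ℂ X)))
        (Rl.comp g'') p := by simpa [hRl] using h1
    exact h2
  have hu : HasFDerivAt (pBracket f g)
      (((D2 g p).comp (Rl.comp f'') + (Rr.comp g'').flip (D1 f p)) -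
        ((D2 f p).comp (Rl.comp g'') + (Rr.comp f'').flip (D1 g p))) p :=
    (hD2g.clm_apply hD1f).sub (hD2f.clm_apply hD1g)
  set u' := ((D2 g p).comp (Rl.comp f'') + (Rr.comp g'').flip (D1 f p)) -
        ((D2 f p).comp (Rl.comp g'') + (Rr.comp f'').flip (D1 g p)) with hu'
  have hev : ∀ v, u' v = g'' v (-F, D1 f p) - f'' v (-G, D1 g p) := by
    intro v
    have e1 : (D2 g p) ((Rl.comp f'') v) = f'' v (G, 0) := by
      rw [hG]
      simp [hRl, dual_def]
    have e2 : (D2 f p) ((Rl.comp g'') v) = g'' v (F, 0) := by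
      rw [hF]
      simp [hRl, dual_def]
    have e3 : ((Rr.comp g'').flip (D1 f p)) v = g'' v (0, D1 f p) := by
      simp [hRr]
    have e4 : ((Rr.comp f'').flip (D1 g p)) v = f'' v (0, D1 g p) := by
      simp [hRr]
    have sg : g'' v (-F, D1 f p) = g'' v (0, D1 f p) - g'' v (F, 0) := by
      rw [← map_sub]; norm_num
    have sf : f'' v (-G, D1 g p) = f'' v (0, D1 g p) - f'' v (G, 0) := by
      rw [← map_sub]; norm_num
    simp only [hu', ContinuousLinearMap.sub_apply, ContinuousLinearMap.add_apply,
      ContinuousLinearMap.comp_apply] at *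
    rw [e1, e2] at *
    rw [e3, e4, sg, sf]
    ring
  have hfu : fderiv ℂ (pBracket f g) p = u' := hu.fderiv
  show D2 h p (D1 (pBracket f g) p) - D2 (pBracket f g) p (D1 h p) = _
  have d1 : D1 (pBracket f g) p = u'.comp (inl ℂ X (StrongDual ℂ X)) := by rw [D1, hfu]
  have d2 : D2 (pBracket f g) p = u'.comp (inr ℂ X (StrongDual ℂ X)) := by rw [D2, hfu]
  rw [d1, d2, hH]
  have : inclusionInDoubleDual ℂ X H (u'.comp (inl ℂ X (StrongDual ℂ X))) = u' (H, 0) := by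
    rw [dual_def]; simp
  rw [this]
  have : (u'.comp (inr ℂ X (StrongDual ℂ X))) (D1 h p) = u' (0, D1 h p) := by simp
  rw [this, hev, hev]
  have sg : g'' (-H, D1 h p) = g'' (0, D1 h p) - g'' (H, 0) := by
    rw [← map_sub g'']; norm_num
  have sf : f'' (-H, D1 h p) = f'' (0, D1 h p) - f'' (H, 0) := by
    rw [← map_sub f'']; norm_num
  rw [sg, sf]
  simp only [ContinuousLinearMap.sub_apply]
  ring

/-- The Jacobi identity for the canonical Poisson bracket on the class `P∞` of smooth
functions on `X × U` whose second partial derivative lies pointwise in `ι(X)`. -/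
theorem pBracket_jacobi
    {X : Type*} [NormedAddCommGroup X] [NormedSpace ℂ X] [CompleteSpace X]
    (U : Set (StrongDual ℂ X)) (hU : IsOpen U) (f g h : X × StrongDual ℂ X → ℂ)
    (hf : ContDiffOn ℂ (⊤ : ℕ∞) f (Set.univ ×ˢ U))
    (hg : ContDiffOn ℂ (⊤ : ℕ∞) g (Set.univ ×ˢ U))
    (hh : ContDiffOn ℂ (⊤ : ℕ∞) h (Set.univ ×ˢ U))
    (hfP : ∀ p ∈ Set.univ ×ˢ U, D2 f p ∈ Set.range ⇑(inclusionInDoubleDual ℂ X))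
    (hgP : ∀ p ∈ Set.univ ×ˢ U, D2 g p ∈ Set.range ⇑(inclusionInDoubleDual ℂ X))
    (hhP : ∀ p ∈ Set.univ ×ˢ U, D2 h p ∈ Set.range ⇑(inclusionInDoubleDual ℂ X)) :
    ∀ p ∈ Set.univ ×ˢ U,
      pBracket (pBracket f g) h p + pBracket (pBracket g h) f p
        + pBracket (pBracket h f) g p = 0 := by
  intro p hp
  obtain ⟨F, hF⟩ := hfP p hp
  obtain ⟨G, hG⟩ := hgP p hp
  obtain ⟨H, hH⟩ := hhP p hp
  have e1 := pBracket_aux U hU f g h hf hg hp F G H hF.symm hG.symm hH.symm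
  have e2 := pBracket_aux U hU g h f hg hh hp G H F hG.symm hH.symm hF.symm
  have e3 := pBracket_aux U hU h f g hh hf hp H F G hH.symm hF.symm hG.symm
  have hΩ : IsOpen ((Set.univ : Set X) ×ˢ U) := isOpen_univ.prod hU
  have hnb : (Set.univ : Set X) ×ˢ U ∈ nhds p := hΩ.mem_nhds hp
  have sf := (hf.contDiffAt hnb).isSymmSndFDerivAt (n := (⊤ : ℕ∞)) (by rw [minSmoothness_of_isRCLikeNormedField]; exact WithTop.coe_le_coe.2 le_top)
  have sg := (hg.contDiffAt hnb).isSymmSndFDerivAt (n := (⊤ : ℕ∞)) (by rw [minSmoothness_of_isRCLikeNormedField]; exact WithTop.coe_le_coe.2 le_top)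
  have sh := (hh.contDiffAt hnb).isSymmSndFDerivAt (n := (⊤ : ℕ∞)) (by rw [minSmoothness_of_isRCLikeNormedField]; exact WithTop.coe_le_coe.2 le_top)
  rw [e1, e2, e3, sf.eq (-H, D1 h p) (-G, D1 g p), sg.eq (-F, D1 f p) (-H, D1 h p),
    sh.eq (-G, D1 g p) (-F, D1 f p)]
  ring
end

section
/- Let f belong to P∞, the class of smooth functions on X × U whose second partial derivative lies pointwise in ι(X), and for (φ,η) ∈ X × U let ψ_f(φ,η) be the unique element of X with ι(ψ_f(φ,η)) = D₂f(φ,η); set ξ_f(φ,η) := (−ψ_f(φ,η), D₁f(φ,η)) ∈ X × E. Then: (a) for all (θ,v) ∈ X × E, ω(ξ_f(φ,η), (θ,v)) = −(D₁f(φ,η)(θ) + D₂f(φ,η)(v)), i.e. ξ_f is a Hamiltonian vector field for f with respect to the weak symplectic form ω; and (b) for every function g smooth on X × U, the total derivative of g at (φ,η) applied to ξ_f(φ,η) equals {f,g}(φ,η). -/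
open NormedSpace

variable {X : Type*} [NormedAddCommGroup X] [NormedSpace ℂ X]

/-- The weak symplectic form `ω((θ₁,v₁),(θ₂,v₂)) = v₂(θ₁) − v₁(θ₂)` on `X × E`. -/
noncomputable def omegaForm (a b : X × StrongDual ℂ X) : ℂ := b.2 a.1 - a.2 b.1

/-- For `f ∈ P∞` with `ι(ψ_f) = D₂f`, the vector field `ξ_f := (−ψ_f, D₁f)` is Hamiltonian
for `f` with respect to the weak symplectic form `ω`, i.e. `ω(ξ_f,·) = −df`, and the
derivative of any smooth `g` along `ξ_f` is the Poisson bracket `{f,g}`. -/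
theorem hamiltonian_vector_field_of_mem_Pinfty
    {X : Type*} [NormedAddCommGroup X] [NormedSpace ℂ X] [CompleteSpace X]
    (U : Set (StrongDual ℂ X)) (hU : IsOpen U) (f : X × StrongDual ℂ X → ℂ)
    (hf : ContDiffOn ℂ (⊤ : ℕ∞) f (Set.univ ×ˢ U))
    (ψ : X × StrongDual ℂ X → X)
    (hψ : ∀ p ∈ Set.univ ×ˢ U, inclusionInDoubleDual ℂ X (ψ p) = D2 f p) :
    (∀ p ∈ Set.univ ×ˢ U, ∀ (θ : X) (v : StrongDual ℂ X),
        omegaForm (-ψ p, D1 f p) (θ, v) = -(D1 f p θ + D2 f p v)) ∧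
      ∀ g : X × StrongDual ℂ X → ℂ, ContDiffOn ℂ (⊤ : ℕ∞) g (Set.univ ×ˢ U) →
        ∀ p ∈ Set.univ ×ˢ U, fderiv ℂ g p (-ψ p, D1 f p) = pBracket f g p := by
  constructor
  · intro p hp θ v
    have h := hψ p hp
    have hv : D2 f p v = v (ψ p) := by
      rw [← h]; rfl
    simp only [omegaForm, hv, map_neg]
    ring
  · intro g _ p hp
    have h := hψ p hp
    have key : ((-ψ p, D1 f p) : X × StrongDual ℂ X) = -(ψ p, 0) + (0, D1 f p) := by
      simp [Prod.ext_iff]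
    rw [key, map_add, map_neg]
    have h1 : fderiv ℂ g p (ψ p, 0) = D1 g p (ψ p) := rfl
    have h2 : fderiv ℂ g p (0, D1 f p) = D2 g p (D1 f p) := rfl
    have h3 : D2 f p (D1 g p) = D1 g p (ψ p) := by rw [← h]; rfl
    rw [h1, h2, pBracket, h3]
    ring
end

section
/- Let V₁, V₂ : U → E and ρ₁, ρ₂ : U → ℂ be Fréchet-smooth, and define f_{V,ρ} : X × U → ℂ by f_{V,ρ}(φ,η) := (V(η))(φ) + ρ(η). Then the canonical Poisson bracket of two such fibre-wise affine functions is again of this form: {f_{V₁,ρ₁}, f_{V₂,ρ₂}} = f_{[V₁,V₂], σ}, where [V₁,V₂](η) := DV₂(η)(V₁(η)) − DV₁(η)(V₂(η)) and σ(η) := Dρ₂(η)(V₁(η)) − Dρ₁(η)(V₂(η)). -/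
open NormedSpace

variable {X : Type*} [NormedAddCommGroup X] [NormedSpace ℂ X]

/-- The fibre-wise affine function `f_{V,ρ}(φ,η) = (V(η))(φ) + ρ(η)` on `X × E`. -/
noncomputable def fVrho (V : StrongDual ℂ X → StrongDual ℂ X) (ρ : StrongDual ℂ X → ℂ)
    (p : X × StrongDual ℂ X) : ℂ :=
  V p.2 p.1 + ρ p.2

lemma hasFDerivAt_fVrho {X : Type*} [NormedAddCommGroup X] [NormedSpace ℂ X]
    (V : StrongDual ℂ X → StrongDual ℂ X) (ρ : StrongDual ℂ X → ℂ) {η : StrongDual ℂ X}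
    (hV : DifferentiableAt ℂ V η) (hρ : DifferentiableAt ℂ ρ η) (φ : X) :
    HasFDerivAt (fVrho V ρ)
      (((V η).comp (ContinuousLinearMap.fst ℂ X (StrongDual ℂ X)) +
        ((fderiv ℂ V η).comp (ContinuousLinearMap.snd ℂ X (StrongDual ℂ X))).flip φ) +
        (fderiv ℂ ρ η).comp (ContinuousLinearMap.snd ℂ X (StrongDual ℂ X))) (φ, η) := by
  have hc : HasFDerivAt (fun p : X × StrongDual ℂ X => V p.2)
      ((fderiv ℂ V η).comp (ContinuousLinearMap.snd ℂ X (StrongDual ℂ X))) (φ, η) :=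
    hV.hasFDerivAt.comp (φ, η) (hasFDerivAt_snd)
  have hu : HasFDerivAt (fun p : X × StrongDual ℂ X => p.1)
      (ContinuousLinearMap.fst ℂ X (StrongDual ℂ X)) (φ, η) := hasFDerivAt_fst
  have hρ' : HasFDerivAt (fun p : X × StrongDual ℂ X => ρ p.2)
      ((fderiv ℂ ρ η).comp (ContinuousLinearMap.snd ℂ X (StrongDual ℂ X))) (φ, η) :=
    hρ.hasFDerivAt.comp (φ, η) (hasFDerivAt_snd)
  exact (hc.clm_apply hu).add hρ'

/-- The canonical Poisson bracket of two fibre-wise affine functions `f_{V₁,ρ₁}`, `f_{V₂,ρ₂}`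
is again fibre-wise affine: `{f_{V₁,ρ₁}, f_{V₂,ρ₂}} = f_{[V₁,V₂],σ}` with
`[V₁,V₂](η) = DV₂(η)(V₁(η)) − DV₁(η)(V₂(η))` and `σ(η) = Dρ₂(η)(V₁(η)) − Dρ₁(η)(V₂(η))`. -/
theorem pBracket_fVrho
    {X : Type*} [NormedAddCommGroup X] [NormedSpace ℂ X] [CompleteSpace X]
    (U : Set (StrongDual ℂ X)) (hU : IsOpen U)
    (V₁ V₂ : StrongDual ℂ X → StrongDual ℂ X) (ρ₁ ρ₂ : StrongDual ℂ X → ℂ)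
    (hV₁ : ContDiffOn ℂ (⊤ : ℕ∞) V₁ U) (hV₂ : ContDiffOn ℂ (⊤ : ℕ∞) V₂ U)
    (hρ₁ : ContDiffOn ℂ (⊤ : ℕ∞) ρ₁ U) (hρ₂ : ContDiffOn ℂ (⊤ : ℕ∞) ρ₂ U) :
    ∀ p ∈ (Set.univ ×ˢ U : Set (X × StrongDual ℂ X)),
      pBracket (fVrho V₁ ρ₁) (fVrho V₂ ρ₂) p =
        fVrho (fun η => fderiv ℂ V₂ η (V₁ η) - fderiv ℂ V₁ η (V₂ η))
          (fun η => fderiv ℂ ρ₂ η (V₁ η) - fderiv ℂ ρ₁ η (V₂ η)) p := fun p hp => by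
  obtain ⟨φ, η⟩ := p
  have hη : η ∈ U := hp.2
  have hVd₁ : DifferentiableAt ℂ V₁ η :=
    (hV₁.differentiableOn (by simp)).differentiableAt (hU.mem_nhds hη)
  have hVd₂ : DifferentiableAt ℂ V₂ η :=
    (hV₂.differentiableOn (by simp)).differentiableAt (hU.mem_nhds hη)
  have hρd₁ : DifferentiableAt ℂ ρ₁ η :=
    (hρ₁.differentiableOn (by simp)).differentiableAt (hU.mem_nhds hη)
  have hρd₂ : DifferentiableAt ℂ ρ₂ η :=
    (hρ₂.differentiableOn (by simp)).differentiableAt (hU.mem_nhds hη)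
  have hf := (hasFDerivAt_fVrho V₁ ρ₁ hVd₁ hρd₁ φ).fderiv
  have hg := (hasFDerivAt_fVrho V₂ ρ₂ hVd₂ hρd₂ φ).fderiv
  have hD1f : D1 (fVrho V₁ ρ₁) (φ, η) = V₁ η := by
    ext x
    simp [D1, hf]
  have hD1g : D1 (fVrho V₂ ρ₂) (φ, η) = V₂ η := by
    ext x
    simp [D1, hg]
  simp only [pBracket, hD1f, hD1g, D2, hf, hg, fVrho, ContinuousLinearMap.comp_apply,
    ContinuousLinearMap.inr_apply, ContinuousLinearMap.add_apply,
    ContinuousLinearMap.flip_apply, ContinuousLinearMap.coe_fst',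
    ContinuousLinearMap.coe_snd', map_zero, ContinuousLinearMap.sub_apply,
    ContinuousLinearMap.zero_apply]
  simp
  ring
end

section
/- For all Fréchet-smooth functions F, G : X₀ → ℂ, the compositions F∘J and G∘J are smooth on X × E and the momentum map J intertwines the canonical bracket with the Lie–Poisson bracket: {F∘J, G∘J}(φ,η) = {F,G}_LP(J(φ,η)) for all (φ,η) ∈ X × E. -/
open NormedSpace

variable {X : Type*} [NormedAddCommGroup X] [NormedSpace ℂ X]

/-- The Lie–Poisson bracket `{F,G}_LP(β) = ⟨β, [b_F(β), b_G(β)]⟩` on the predual `X₀` of a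
Banach algebra `B`, where `b_F(β) = j₀⁻¹(DF(β))`. -/
noncomputable def liePoisson {X₀ B : Type*} [NormedAddCommGroup X₀] [NormedSpace ℂ X₀]
    [NormedRing B] [NormedAlgebra ℂ B] (j₀ : B ≃L[ℂ] StrongDual ℂ X₀)
    (F G : X₀ → ℂ) (β : X₀) : ℂ :=
  j₀ (j₀.symm (fderiv ℂ F β) * j₀.symm (fderiv ℂ G β)
      - j₀.symm (fderiv ℂ G β) * j₀.symm (fderiv ℂ F β)) β

set_option maxHeartbeats 1000000 in
/-- The momentum map `J` intertwines the canonical Poisson bracket on `X × E` with the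
Lie–Poisson bracket on the predual `X₀` of the Banach algebra `B`: for smooth `F, G`,
`F∘J` and `G∘J` are smooth and `{F∘J, G∘J} = {F,G}_LP ∘ J`. -/
theorem momentumMap_liePoisson
    {X X₀ B : Type*} [NormedAddCommGroup X] [NormedSpace ℂ X] [CompleteSpace X]
    [NormedAddCommGroup X₀] [NormedSpace ℂ X₀] [CompleteSpace X₀]
    [NormedRing B] [NormedAlgebra ℂ B] [CompleteSpace B]
    (j₀ : B ≃L[ℂ] StrongDual ℂ X₀)
    (r : StrongDual ℂ X →L[ℂ] B →L[ℂ] StrongDual ℂ X)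
    (hr : ∀ (η : StrongDual ℂ X) (a b : B), r (r η a) b = r η (a * b))
    (J : X × StrongDual ℂ X → X₀)
    (hJ : ∀ (φ : X) (η : StrongDual ℂ X) (a : B), j₀ a (J (φ, η)) = r η a φ)
    (F G : X₀ → ℂ) (hF : ContDiff ℂ (⊤ : ℕ∞) F) (hG : ContDiff ℂ (⊤ : ℕ∞) G) :
    ContDiff ℂ (⊤ : ℕ∞) (F ∘ J) ∧ ContDiff ℂ (⊤ : ℕ∞) (G ∘ J) ∧
      ∀ (φ : X) (η : StrongDual ℂ X),
        pBracket (F ∘ J) (G ∘ J) (φ, η) = liePoisson j₀ F G (J (φ, η)) := by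
  classical
  letI : NormedAddCommGroup (B →L[ℂ] StrongDual ℂ X) := ContinuousLinearMap.toNormedAddCommGroup
  letI : NormedSpace ℂ (B →L[ℂ] StrongDual ℂ X) := ContinuousLinearMap.toNormedSpace
  -- functionals separate points of X₀, via j₀
  have hsep : ∀ β β' : X₀, (∀ a : B, j₀ a β = j₀ a β') → β = β' := by
    intro β β' h
    rw [NormedSpace.eq_iff_forall_dual_eq (𝕜 := ℂ)]
    intro g
    simpa using h (j₀.symm g)
  -- J is bilinear
  have hadd₁ : ∀ (φ φ' : X) (η : StrongDual ℂ X), J (φ + φ', η) = J (φ, η) + J (φ', η) := by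
    intro φ φ' η
    refine hsep _ _ fun a => ?_
    rw [hJ, map_add, map_add, hJ, hJ]
  have hsmul₁ : ∀ (c : ℂ) (φ : X) (η : StrongDual ℂ X), J (c • φ, η) = c • J (φ, η) := by
    intro c φ η
    refine hsep _ _ fun a => ?_
    rw [hJ, map_smul, map_smul, hJ]
  have hadd₂ : ∀ (φ : X) (η η' : StrongDual ℂ X), J (φ, η + η') = J (φ, η) + J (φ, η') := by
    intro φ η η'
    refine hsep _ _ fun a => ?_
    rw [hJ, map_add, map_add, hJ, hJ]
    simp
  have hsmul₂ : ∀ (c : ℂ) (φ : X) (η : StrongDual ℂ X), J (φ, c • η) = c • J (φ, η) := by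
    intro c φ η
    refine hsep _ _ fun a => ?_
    rw [hJ, map_smul, map_smul, hJ]
    simp
  -- the bilinear map as a linear map
  set Jₗ : X →ₗ[ℂ] StrongDual ℂ X →ₗ[ℂ] X₀ :=
    LinearMap.mk₂ ℂ (fun φ η => J (φ, η)) (fun φ φ' η => hadd₁ φ φ' η)
      (fun c φ η => hsmul₁ c φ η) (fun φ η η' => hadd₂ φ η η')
      (fun c φ η => hsmul₂ c φ η) with hJₗ
  -- continuity bound
  have hCnn : (0:ℝ) ≤ ‖r‖ * ‖(j₀.symm : StrongDual ℂ X₀ →L[ℂ] B)‖ := by positivity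
  have hbound : ∀ (φ : X) (η : StrongDual ℂ X),
      ‖J (φ, η)‖ ≤ ‖r‖ * ‖(j₀.symm : StrongDual ℂ X₀ →L[ℂ] B)‖ * ‖φ‖ * ‖η‖ := by
    intro φ η
    refine NormedSpace.norm_le_dual_bound ℂ _ (by positivity) fun f => ?_
    have h1 : f (J (φ, η)) = r η (j₀.symm f) φ := by
      conv_lhs => rw [show f = j₀ (j₀.symm f) by simp]
      rw [hJ]
    rw [h1]
    have h2 : ‖r η (j₀.symm f)‖ ≤ ‖r‖ * ‖η‖ * ‖j₀.symm f‖ := r.le_opNorm₂ η _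
    have h3 : ‖j₀.symm f‖ ≤ ‖(j₀.symm : StrongDual ℂ X₀ →L[ℂ] B)‖ * ‖f‖ :=
      (j₀.symm : StrongDual ℂ X₀ →L[ℂ] B).le_opNorm f
    calc ‖r η (j₀.symm f) φ‖ ≤ ‖r η (j₀.symm f)‖ * ‖φ‖ := (r η (j₀.symm f)).le_opNorm φ
      _ ≤ ‖r‖ * ‖η‖ * ‖j₀.symm f‖ * ‖φ‖ := mul_le_mul_of_nonneg_right h2 (norm_nonneg φ)
      _ ≤ ‖r‖ * ‖η‖ * (‖(j₀.symm : StrongDual ℂ X₀ →L[ℂ] B)‖ * ‖f‖) * ‖φ‖ := by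
          gcongr
      _ = ‖r‖ * ‖(j₀.symm : StrongDual ℂ X₀ →L[ℂ] B)‖ * ‖φ‖ * ‖η‖ * ‖f‖ := by ring
  set Jb : X →L[ℂ] StrongDual ℂ X →L[ℂ] X₀ :=
    LinearMap.mkContinuous₂ Jₗ (‖r‖ * ‖(j₀.symm : StrongDual ℂ X₀ →L[ℂ] B)‖)
      (fun φ η => by simpa [hJₗ, mul_assoc] using hbound φ η) with hJb
  have hJeq : J = fun p : X × StrongDual ℂ X => Jb p.1 p.2 := funext fun p => rfl
  have hbb : IsBoundedBilinearMap ℂ fun p : X × StrongDual ℂ X => Jb p.1 p.2 :=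
    Jb.isBoundedBilinearMap
  have hJsmooth : ContDiff ℂ (⊤ : ℕ∞) J := by rw [hJeq]; exact hbb.contDiff
  refine ⟨hF.comp hJsmooth, hG.comp hJsmooth, fun φ η => ?_⟩
  -- derivatives
  have hdJ : ∀ p : X × StrongDual ℂ X, fderiv ℂ J p = hbb.deriv p := by
    intro p; rw [hJeq]; exact hbb.fderiv p
  have hdiffJ : ∀ p : X × StrongDual ℂ X, DifferentiableAt ℂ J p := fun p =>
    (hJsmooth.differentiable (by simp)).differentiableAt
  have key : ∀ (H : X₀ → ℂ) (hH : ContDiff ℂ (⊤ : ℕ∞) H) (p : X × StrongDual ℂ X) (q : X × StrongDual ℂ X),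
      fderiv ℂ (H ∘ J) p q = fderiv ℂ H (J p) (J (p.1, q.2) + J (q.1, p.2)) := by
    intro H hH p q
    rw [fderiv_comp p ((hH.differentiable (by simp)).differentiableAt) (hdiffJ p)]
    simp only [ContinuousLinearMap.coe_comp', Function.comp_apply, hdJ p,
      hbb.deriv_apply]
    rfl
  set a : B := j₀.symm (fderiv ℂ F (J (φ, η))) with ha
  set b : B := j₀.symm (fderiv ℂ G (J (φ, η))) with hb
  have hFa : fderiv ℂ F (J (φ, η)) = j₀ a := by simp [ha]
  have hGb : fderiv ℂ G (J (φ, η)) = j₀ b := by simp [hb]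
  have hJ0₁ : ∀ η' : StrongDual ℂ X, J ((0:X), η') = 0 := by
    intro η'; simpa using hsmul₁ 0 0 η'
  have hJ0₂ : ∀ φ' : X, J (φ', (0 : StrongDual ℂ X)) = 0 := by
    intro φ'; simpa [show (0:ℂ) • (0 : StrongDual ℂ X) = 0 by ext; simp] using hsmul₂ 0 φ' 0
  -- D1 and D2 of the composites
  have hD1 : ∀ (H : X₀ → ℂ) (hH : ContDiff ℂ (⊤ : ℕ∞) H),
      D1 (H ∘ J) (φ, η) = r η (j₀.symm (fderiv ℂ H (J (φ, η)))) := by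
    intro H hH
    ext φ'
    have := key H hH (φ, η) (φ', 0)
    simp only [D1, ContinuousLinearMap.coe_comp', Function.comp_apply,
      ContinuousLinearMap.inl_apply]
    rw [this]
    simp only [hJ0₂ φ]
    rw [zero_add, show fderiv ℂ H (J (φ, η)) = j₀ (j₀.symm (fderiv ℂ H (J (φ, η)))) by simp,
      hJ]
    simp
  have hD2 : ∀ (H : X₀ → ℂ) (hH : ContDiff ℂ (⊤ : ℕ∞) H) (w : StrongDual ℂ X),
      D2 (H ∘ J) (φ, η) w = r w (j₀.symm (fderiv ℂ H (J (φ, η)))) φ := by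
    intro H hH w
    have := key H hH (φ, η) (0, w)
    simp only [D2, ContinuousLinearMap.coe_comp', Function.comp_apply,
      ContinuousLinearMap.inr_apply]
    rw [this]
    simp only [hJ0₁ η]
    rw [add_zero, show fderiv ℂ H (J (φ, η)) = j₀ (j₀.symm (fderiv ℂ H (J (φ, η)))) by simp,
      hJ]
    simp
  -- finish
  rw [pBracket, hD2 F hF, hD2 G hG, hD1 F hF, hD1 G hG, ← ha, ← hb]
  rw [hr, hr, ← hJ φ η (a * b), ← hJ φ η (b * a), liePoisson, ← ha, ← hb, map_sub]
  simp
end
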